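/- arXiv:2211.03765 — 2 statements merged into one kernel-verified Lean document; each statement's English description precedes it below -/
import Mathlib

section
/- Let Γ be an abstract simplicial complex on [m] and let r_1,…,r_m be positive integers. Then the rank over ℚ of the matrix A_Γ equals the exponential Hilbert series of Γ evaluated at (log r_1,…,log r_m): rank(A_Γ) = E(Γ; log r_1,…,log r_m) = ∑_{a ∈ ℕ^m, supp(a) ∈ Γ} ∏_{f=1}^m (log r_f)^{a_f}/a_f!, where the series converges absolutely. -/
open Finset

/-- An abstract simplicial complex on `[m]`: contains the empty set and all
singletons, and is closed under taking subsets. -/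
def IsSimplicialComplex {m : ℕ} (Γ : Finset (Finset (Fin m))) : Prop :=
  ∅ ∈ Γ ∧ (∀ i : Fin m, ({i} : Finset (Fin m)) ∈ Γ) ∧ ∀ F ∈ Γ, ∀ G, G ⊆ F → G ∈ Γ

/-- A facet is a maximal face. -/
def IsFacet {m : ℕ} (Γ : Finset (Finset (Fin m))) (F : Finset (Fin m)) : Prop :=
  F ∈ Γ ∧ ∀ G ∈ Γ, F ⊆ G → G = F

instance {m : ℕ} (Γ : Finset (Finset (Fin m))) : DecidablePred (IsFacet Γ) := fun F =>
  decidable_of_iff (F ∈ Γ ∧ ∀ G ∈ Γ, F ⊆ G → G = F) Iff.rfl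

/-- The 0/1 matrix of the hierarchical log-linear model: rows indexed by pairs
`(F, j)` with `F` a facet of `Γ` and `j` a tuple of states for the coordinates
in `F`; columns indexed by tuples `i` of states of all `m` variables; the entry
is `1` iff the restriction of `i` to `F` is `j`. -/
def hierMatrix {m : ℕ} (Γ : Finset (Finset (Fin m))) (r : Fin m → ℕ) :
    Matrix (Σ F : {F : Finset (Fin m) // IsFacet Γ F}, (∀ f : (F.val : Finset (Fin m)), Fin (r f)))
      (∀ i : Fin m, Fin (r i)) ℚ :=
  fun row col => if (∀ f : (row.1.val : Finset (Fin m)), row.2 f = col f) then 1 else 0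



lemma hasSum_pi_nat : ∀ (n : ℕ) (g : Fin n → ℕ → ℝ) (v : Fin n → ℝ),
    (∀ i, HasSum (g i) (v i)) → (∀ i k, 0 ≤ g i k) →
    HasSum (fun a : Fin n → ℕ => ∏ i, g i (a i)) (∏ i, v i) := by
  intro n
  induction n with
  | zero =>
    intro g v _ _
    simpa using hasSum_fintype (fun _ : Fin 0 → ℕ => (1 : ℝ))
  | succ n ih =>
    intro g v hg hpos
    have h1 := hg 0
    have h2 := ih (fun i => g i.succ) (fun i => v i.succ) (fun i => hg _) (fun i k => hpos _ _)
    have hs := Summable.mul_of_nonneg h1.summable h2.summable (fun k => hpos 0 k)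
        (fun a => Finset.prod_nonneg fun i _ => hpos _ _)
    have hmul := h1.mul h2 hs
    rw [Fin.prod_univ_succ, ← (Fin.consEquiv (fun _ : Fin (n+1) => ℕ)).hasSum_iff]
    have hfe : ((fun a : Fin (n+1) → ℕ => ∏ i, g i (a i)) ∘ (Fin.consEquiv (fun _ : Fin (n+1) => ℕ)))
        = fun x : ℕ × (Fin n → ℕ) => g 0 x.1 * ∏ i, g i.succ (x.2 i) := by
      funext x
      simp only [Function.comp_apply, Fin.consEquiv, Equiv.coe_fn_mk,
        Fin.prod_univ_succ, Fin.cons_zero, Fin.cons_succ]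
    rw [hfe]
    exact hmul

lemma hasSum_expFactor (t : ℝ) : HasSum (fun k : ℕ => t ^ k / k.factorial) (Real.exp t) := by
  have hsum := Real.summable_pow_div_factorial t
  have h := hsum.hasSum
  rwa [show (∑' k : ℕ, t ^ k / k.factorial) = Real.exp t by
    rw [Real.exp_eq_exp_ℝ, NormedSpace.exp_eq_tsum_div]] at h

lemma hasSum_expFactor' (t : ℝ) :
    HasSum (fun k : ℕ => if k = 0 then 0 else t ^ k / k.factorial) (Real.exp t - 1) := by
  have h := (hasSum_expFactor t).sub (hasSum_ite_eq 0 (1:ℝ))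
  convert h using 1
  · rfl
  funext k
  by_cases hk : k = 0 <;> simp [hk]

lemma filter_ne_eq_iff {m : ℕ} (a : Fin m → ℕ) (S : Finset (Fin m)) :
    (univ.filter fun i => a i ≠ 0) = S ↔ ∀ i, (a i ≠ 0 ↔ i ∈ S) := by
  rw [Finset.ext_iff]
  apply forall_congr'
  intro i
  simp

lemma hasSum_supportEq {m : ℕ} (t : Fin m → ℝ) (ht : ∀ i, 0 ≤ t i) (S : Finset (Fin m)) :
    HasSum (fun a : Fin m → ℕ =>
        if (univ.filter fun i => a i ≠ 0) = S then
          ∏ i, t i ^ a i / ((a i).factorial : ℝ) else 0)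
      (∏ i ∈ S, (Real.exp (t i) - 1)) := by
  set g : Fin m → ℕ → ℝ := fun i k =>
    if i ∈ S then (if k = 0 then 0 else t i ^ k / k.factorial)
    else (if k = 0 then 1 else 0) with hgdef
  have hg : ∀ i, HasSum (g i) (if i ∈ S then Real.exp (t i) - 1 else 1) := by
    intro i
    by_cases hi : i ∈ S <;> simp only [hgdef, hi, if_true, if_false]
    · exact hasSum_expFactor' (t i)
    · exact hasSum_ite_eq 0 1
  have hpos : ∀ i k, 0 ≤ g i k := by
    intro i k
    by_cases hi : i ∈ S <;> by_cases hk : k = 0 <;> simp [hgdef, hi, hk]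
    exact div_nonneg (pow_nonneg (ht i) k) (by positivity)
  have H := hasSum_pi_nat m g _ hg hpos
  have hval : (∏ i, if i ∈ S then Real.exp (t i) - 1 else 1)
      = ∏ i ∈ S, (Real.exp (t i) - 1) := by
    rw [Finset.prod_ite_mem univ S, Finset.univ_inter]
  rw [hval] at H
  convert H using 1
  funext a
  by_cases ha : (univ.filter fun i => a i ≠ 0) = S
  · rw [if_pos ha]
    rw [filter_ne_eq_iff] at ha
    apply Finset.prod_congr rfl
    intro i _
    by_cases hi : i ∈ S
    · have hai : a i ≠ 0 := (ha i).mpr hi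
      simp [hgdef, hi, hai]
    · have hai : a i = 0 := by
        by_contra hc
        exact hi ((ha i).mp hc)
      simp [hgdef, hi, hai]
  · rw [if_neg ha]
    rw [filter_ne_eq_iff] at ha
    push_neg at ha
    obtain ⟨i, hi⟩ := ha
    symm
    apply Finset.prod_eq_zero (mem_univ i)
    by_cases hiS : i ∈ S
    · have : a i = 0 := by tauto
      simp [hgdef, hiS, this]
    · have : a i ≠ 0 := by tauto
      simp [hgdef, hiS, this]

lemma hasSum_gamma {m : ℕ} (Γ : Finset (Finset (Fin m))) (t : Fin m → ℝ) (ht : ∀ i, 0 ≤ t i) :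
    HasSum (fun a : {a : Fin m → ℕ // (univ.filter fun i => a i ≠ 0) ∈ Γ} =>
        ∏ i, t i ^ (a.val i) / ((a.val i).factorial : ℝ))
      (∑ S ∈ Γ, ∏ i ∈ S, (Real.exp (t i) - 1)) := by
  have H : HasSum (fun a : Fin m → ℕ =>
      if (univ.filter fun i => a i ≠ 0) ∈ Γ then ∏ i, t i ^ a i / ((a i).factorial : ℝ) else 0)
      (∑ S ∈ Γ, ∏ i ∈ S, (Real.exp (t i) - 1)) := by
    have h := hasSum_sum (fun S (_ : S ∈ Γ) => hasSum_supportEq t ht S)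
    convert h using 1
    funext a
    rw [Finset.sum_ite_eq Γ (univ.filter fun i => a i ≠ 0)
      (fun _ => ∏ i, t i ^ a i / ((a i).factorial : ℝ))]
  have hsupp : Function.support (fun a : Fin m → ℕ =>
      if (univ.filter fun i => a i ≠ 0) ∈ Γ then ∏ i, t i ^ a i / ((a i).factorial : ℝ) else 0)
      ⊆ {a : Fin m → ℕ | (univ.filter fun i => a i ≠ 0) ∈ Γ} := by
    intro a ha
    by_contra hc
    exact ha (if_neg hc)
  rw [← hasSum_subtype_iff_of_support_subset hsupp] at H
  change HasSum (fun a : {a : Fin m → ℕ // (univ.filter fun i => a i ≠ 0) ∈ Γ} =>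
    if (univ.filter fun i => a.val i ≠ 0) ∈ Γ then ∏ i, t i ^ a.val i / ((a.val i).factorial : ℝ)
    else 0) _ at H
  convert H using 1
  funext a
  exact (if_pos a.2).symm


lemma sum_delta_mul {n : ℕ} (c : Fin n) (f : Fin n → ℚ) :
    ∑ x, (if x = c then 1 else 0) * f x = f c := by
  simp [ite_mul, Finset.sum_ite_eq']

section rank
variable {m : ℕ} {r : Fin m → ℕ}

def uu (hr : ∀ i, 0 < r i) (i : Fin m) (a x : Fin (r i)) : ℚ :=
  if a = ⟨0, hr i⟩ then 1 else (if x = a then 1 else 0)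

def vv (hr : ∀ i, 0 < r i) (i : Fin m) (a x : Fin (r i)) : ℚ :=
  if a = ⟨0, hr i⟩ then (if x = ⟨0, hr i⟩ then 1 else 0)
  else ((if x = a then 1 else 0) - (if x = ⟨0, hr i⟩ then 1 else 0))

def gg (hr : ∀ i, 0 < r i) (a : ∀ i, Fin (r i)) : (∀ i, Fin (r i)) → ℚ :=
  fun x => ∏ i, uu hr i (a i) (x i)

lemma uv_pair (hr : ∀ i, 0 < r i) (i : Fin m) (a b : Fin (r i)) :
    ∑ x, uu hr i a x * vv hr i b x = if a = b then 1 else 0 := by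
  by_cases ha : a = ⟨0, hr i⟩ <;> by_cases hb : b = ⟨0, hr i⟩ <;>
    simp only [uu, vv, ha, hb, if_true, if_false, one_mul]
  · simp
  · have h2 : (⟨0, hr i⟩ : Fin (r i)) ≠ b := fun h => hb h.symm
    simp [Finset.sum_sub_distrib, h2]
  · rw [sum_delta_mul a (fun x => if x = ⟨0, hr i⟩ then 1 else 0)]
    have : a ≠ b := by rw [hb]; exact ha
    simp [ha, this]
  · rw [sum_delta_mul a
      (fun x => (if x = b then 1 else 0) - (if x = ⟨0, hr i⟩ then 1 else 0))]
    simp [ha]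

lemma gh_pair (hr : ∀ i, 0 < r i) (a b : ∀ i, Fin (r i)) :
    ∑ x : (∀ i, Fin (r i)), gg hr a x * (∏ i, vv hr i (b i) (x i))
      = if a = b then 1 else 0 := by
  calc ∑ x : (∀ i, Fin (r i)), gg hr a x * (∏ i, vv hr i (b i) (x i))
      = ∑ x : (∀ i, Fin (r i)), ∏ i, (uu hr i (a i) (x i) * vv hr i (b i) (x i)) := by
        refine Finset.sum_congr rfl fun x _ => ?_
        rw [gg, Finset.prod_mul_distrib]
    _ = ∏ i, ∑ y : Fin (r i), uu hr i (a i) y * vv hr i (b i) y := by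
        rw [Finset.prod_univ_sum, Fintype.piFinset_univ]
    _ = ∏ i, (if a i = b i then 1 else 0) := by
        exact Finset.prod_congr rfl fun i _ => uv_pair hr i (a i) (b i)
    _ = if a = b then 1 else 0 := by
        rw [Finset.prod_boole]
        congr 1
        simp [funext_iff, eq_iff_iff]

lemma gg_li (hr : ∀ i, 0 < r i) : LinearIndependent ℚ (gg hr) := by
  rw [Fintype.linearIndependent_iff]
  intro c hc b
  calc c b = ∑ a : (∀ i, Fin (r i)), c a * (if a = b then 1 else 0) := by
        simp [mul_ite, Finset.sum_ite_eq']
    _ = ∑ a : (∀ i, Fin (r i)), c a *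
          ∑ x : (∀ i, Fin (r i)), gg hr a x * (∏ i, vv hr i (b i) (x i)) := by
        refine Finset.sum_congr rfl fun a _ => ?_
        rw [gh_pair hr a b]
    _ = ∑ x : (∀ i, Fin (r i)), (∑ a : (∀ i, Fin (r i)), c a * gg hr a x) *
          (∏ i, vv hr i (b i) (x i)) := by
        simp_rw [Finset.mul_sum]
        rw [Finset.sum_comm]
        simp_rw [Finset.sum_mul, mul_assoc]
    _ = ∑ x : (∀ i, Fin (r i)), (∑ a : (∀ i, Fin (r i)), c a • gg hr a) x *
          (∏ i, vv hr i (b i) (x i)) := by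
        simp [Finset.sum_apply]
    _ = 0 := by rw [hc]; simp

end rank


lemma exists_facet {m : ℕ} (Γ : Finset (Finset (Fin m))) (S : Finset (Fin m)) (hS : S ∈ Γ) :
    ∃ F, IsFacet Γ F ∧ S ⊆ F := by
  obtain ⟨F, hF, hmax⟩ := Finset.exists_max_image (Γ.filter (fun G => S ⊆ G)) Finset.card
    ⟨S, by simp [hS]⟩
  rw [Finset.mem_filter] at hF
  refine ⟨F, ⟨hF.1, ?_⟩, hF.2⟩
  intro G hG hFG
  have hSG : S ⊆ G := hF.2.trans hFG
  have hcard := hmax G (Finset.mem_filter.mpr ⟨hG, hSG⟩)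
  exact (Finset.eq_of_subset_of_card_le hFG hcard).symm

lemma expand_one {n : ℕ} (hn : 0 < n) (x : Fin n) :
    ∑ b : Fin n, (if b = ⟨0, hn⟩ then (1:ℚ) else 0) *
        (if b = ⟨0, hn⟩ then 1 else (if x = b then 1 else 0)) = 1 := by
  simp only [ite_mul, one_mul, zero_mul]
  rw [Finset.sum_ite_eq' univ (⟨0, hn⟩ : Fin n)
    (fun b => if b = ⟨0, hn⟩ then (1:ℚ) else (if x = b then 1 else 0))]
  simp

lemma expand_delta {n : ℕ} (hn : 0 < n) (c x : Fin n) (hc : c ≠ ⟨0, hn⟩) :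
    ∑ b : Fin n, (if b = c then (1:ℚ) else 0) *
        (if b = ⟨0, hn⟩ then 1 else (if x = b then 1 else 0)) = if x = c then 1 else 0 := by
  simp only [ite_mul, one_mul, zero_mul]
  rw [Finset.sum_ite_eq' univ c
    (fun b => if b = ⟨0, hn⟩ then (1:ℚ) else (if x = b then 1 else 0))]
  simp [hc]

lemma expand_delta_zero {n : ℕ} (hn : 0 < n) (x : Fin n) :
    ∑ b : Fin n, (if b = ⟨0, hn⟩ then (1:ℚ) else -1) *
        (if b = ⟨0, hn⟩ then 1 else (if x = b then 1 else 0))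
      = if x = ⟨0, hn⟩ then 1 else 0 := by
  have hterm : ∀ b : Fin n, (if b = ⟨0, hn⟩ then (1:ℚ) else -1) *
      (if b = ⟨0, hn⟩ then 1 else (if x = b then 1 else 0))
      = (if b = ⟨0, hn⟩ then (1:ℚ) else 0)
        + (if b = x then (if b = ⟨0, hn⟩ then 0 else -1) else 0) := by
    intro b
    by_cases h2 : b = x
    · subst h2
      by_cases h1 : b = ⟨0, hn⟩ <;> simp [h1]
    · by_cases h1 : b = ⟨0, hn⟩ <;>
        simp [h1, h2, show x ≠ b from fun h => h2 h.symm]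
  rw [Finset.sum_congr rfl (fun b _ => hterm b), Finset.sum_add_distrib]
  rw [Finset.sum_ite_eq' univ (⟨0, hn⟩ : Fin n) (fun _ => (1:ℚ)),
    Finset.sum_ite_eq' univ x (fun b => if b = ⟨0, hn⟩ then (0:ℚ) else -1)]
  by_cases hx : x = ⟨0, hn⟩ <;> simp [hx]
section spans
variable {m : ℕ} {r : Fin m → ℕ}

lemma row_mem_span (hr : ∀ i, 0 < r i) (Γ : Finset (Finset (Fin m)))
    (hΓ : IsSimplicialComplex Γ) (F : Finset (Fin m)) (hF : IsFacet Γ F)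
    (j : ∀ f : (F : Finset (Fin m)), Fin (r f)) :
    hierMatrix Γ r ⟨⟨F, hF⟩, j⟩ ∈ Submodule.span ℚ
      (Set.range (fun a : {a : ∀ i, Fin (r i) // (univ.filter fun i => a i ≠ ⟨0, hr i⟩) ∈ Γ}
        => gg hr a.val)) := by
  classical
  set β : ∀ i : Fin m, Fin (r i) → ℚ := fun i b =>
    if h : i ∈ F then
      (if j ⟨i, h⟩ = ⟨0, hr i⟩ then (if b = ⟨0, hr i⟩ then 1 else -1)
       else (if b = j ⟨i, h⟩ then 1 else 0))
    else (if b = ⟨0, hr i⟩ then 1 else 0) with hβ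
  have hcoord : ∀ (x : ∀ i, Fin (r i)) (i : Fin m),
      (∑ b, β i b * uu hr i b (x i))
        = if h : i ∈ F then (if x i = j ⟨i, h⟩ then 1 else 0) else 1 := by
    intro x i
    by_cases h : i ∈ F
    · rw [dif_pos h]
      by_cases hj : j ⟨i, h⟩ = ⟨0, hr i⟩
      · calc (∑ b, β i b * uu hr i b (x i))
            = ∑ b, (if b = ⟨0, hr i⟩ then (1:ℚ) else -1) *
                (if b = ⟨0, hr i⟩ then 1 else (if x i = b then 1 else 0)) := by
              refine Finset.sum_congr rfl fun b _ => ?_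
              rw [hβ]
              simp only [uu, dif_pos h, if_pos hj]
          _ = if x i = ⟨0, hr i⟩ then 1 else 0 := expand_delta_zero (hr i) (x i)
          _ = if x i = j ⟨i, h⟩ then 1 else 0 := by rw [hj]
      · calc (∑ b, β i b * uu hr i b (x i))
            = ∑ b, (if b = j ⟨i, h⟩ then (1:ℚ) else 0) *
                (if b = ⟨0, hr i⟩ then 1 else (if x i = b then 1 else 0)) := by
              refine Finset.sum_congr rfl fun b _ => ?_
              rw [hβ]
              simp only [uu, dif_pos h, if_neg hj]
          _ = if x i = j ⟨i, h⟩ then 1 else 0 := expand_delta (hr i) _ (x i) hj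
    · rw [dif_neg h]
      calc (∑ b, β i b * uu hr i b (x i))
          = ∑ b, (if b = ⟨0, hr i⟩ then (1:ℚ) else 0) *
              (if b = ⟨0, hr i⟩ then 1 else (if x i = b then 1 else 0)) := by
            refine Finset.sum_congr rfl fun b _ => ?_
            rw [hβ]
            simp only [uu, dif_neg h]
        _ = 1 := expand_one (hr i) (x i)
  have key : hierMatrix Γ r ⟨⟨F, hF⟩, j⟩
      = ∑ a : ∀ i, Fin (r i), (∏ i, β i (a i)) • gg hr a := by
    funext x
    have h1 : (∏ i, ∑ b, β i b * uu hr i b (x i)) = hierMatrix Γ r ⟨⟨F, hF⟩, j⟩ x := by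
      rw [Finset.prod_congr rfl (fun i _ => hcoord x i)]
      have h2 : (∏ i, if h : i ∈ F then (if x i = j ⟨i, h⟩ then (1:ℚ) else 0) else 1)
          = ∏ i ∈ F, (if h : i ∈ F then (if x i = j ⟨i, h⟩ then (1:ℚ) else 0) else 1) :=
        (Finset.prod_subset (Finset.subset_univ F) (fun i _ hi => by rw [dif_neg hi])).symm
      rw [h2, ← Finset.prod_attach F
        (fun i => if h : i ∈ F then (if x i = j ⟨i, h⟩ then (1:ℚ) else 0) else 1)]
      have h3 : ∀ i : {y // y ∈ F},
          (if h : (i : Fin m) ∈ F then (if x i = j ⟨(i : Fin m), h⟩ then (1:ℚ) else 0) else 1)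
            = (if x i = j i then 1 else 0) := fun i => by rw [dif_pos i.2]
      rw [Finset.prod_congr rfl (fun i _ => h3 i), Finset.prod_boole]
      simp only [hierMatrix]
      have hcond : (∀ i ∈ F.attach, x i = j i) ↔ (∀ f : (F : Finset (Fin m)), j f = x f) := by
        simp [eq_comm]
      by_cases hc : ∀ f : (F : Finset (Fin m)), j f = x f
      · rw [if_pos (hcond.mpr hc), if_pos hc]
      · rw [if_neg (fun h => hc (hcond.mp h)), if_neg hc]
    have h4 : (∏ i, ∑ b, β i b * uu hr i b (x i))
        = ∑ a : ∀ i, Fin (r i), (∏ i, β i (a i)) * gg hr a x := by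
      rw [Finset.prod_univ_sum]
      rw [Fintype.piFinset_univ]
      refine Finset.sum_congr rfl fun a _ => ?_
      rw [gg, Finset.prod_mul_distrib]
    have h5 : (∑ a : ∀ i, Fin (r i), (∏ i, β i (a i)) • gg hr a) x
        = ∑ a : ∀ i, Fin (r i), (∏ i, β i (a i)) * gg hr a x := by
      rw [Finset.sum_apply]
      refine Finset.sum_congr rfl fun a _ => rfl
    rw [h5, ← h4, h1]
  rw [key]
  refine Submodule.sum_mem _ fun a _ => ?_
  by_cases hs : (univ.filter fun i => a i ≠ ⟨0, hr i⟩) ∈ Γ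
  · exact Submodule.smul_mem _ _ (Submodule.subset_span ⟨⟨a, hs⟩, rfl⟩)
  · have hnsub : ¬ (univ.filter fun i => a i ≠ ⟨0, hr i⟩) ⊆ F := fun hsub =>
      hs (hΓ.2.2 F hF.1 _ hsub)
    obtain ⟨i, himem, hiF⟩ := Finset.not_subset.mp hnsub
    rw [Finset.mem_filter] at himem
    have hzero : β i (a i) = 0 := by
      rw [hβ]
      simp only [dif_neg hiF, if_neg himem.2]
    rw [show (∏ i, β i (a i)) = 0 from Finset.prod_eq_zero (mem_univ i) hzero, zero_smul]
    exact Submodule.zero_mem _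

end spans
section spans2
variable {m : ℕ} {r : Fin m → ℕ}

lemma gg_boole (hr : ∀ i, 0 < r i) (a x : ∀ i, Fin (r i)) :
    gg hr a x = if (∀ i, a i ≠ ⟨0, hr i⟩ → x i = a i) then 1 else 0 := by
  rw [gg]
  have h : ∀ i : Fin m, uu hr i (a i) (x i)
      = if (a i ≠ ⟨0, hr i⟩ → x i = a i) then 1 else 0 := by
    intro i
    by_cases h1 : a i = ⟨0, hr i⟩
    · simp [uu, h1]
    · by_cases h2 : x i = a i <;> simp [uu, h1, h2]
  rw [Finset.prod_congr rfl (fun i _ => h i), Finset.prod_boole]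
  by_cases hc : ∀ i, a i ≠ ⟨0, hr i⟩ → x i = a i
  · rw [if_pos (fun i _ => hc i), if_pos hc]
  · rw [if_neg (fun h => hc (fun i => h i (Finset.mem_univ i))), if_neg hc]

lemma gg_mem_rowspan (hr : ∀ i, 0 < r i) (Γ : Finset (Finset (Fin m)))
    (a : ∀ i, Fin (r i)) (F : Finset (Fin m)) (hF : IsFacet Γ F)
    (hsub : ∀ i, a i ≠ ⟨0, hr i⟩ → i ∈ F) :
    gg hr a ∈ Submodule.span ℚ (Set.range (hierMatrix Γ r)) := by
  classical
  have key : gg hr a = ∑ j ∈ (univ : Finset (∀ f : (F : Finset (Fin m)), Fin (r f))).filter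
      (fun j => ∀ f : (F : Finset (Fin m)), a f ≠ ⟨0, hr f⟩ → j f = a f),
      hierMatrix Γ r ⟨⟨F, hF⟩, j⟩ := by
    funext x
    rw [gg_boole hr a x, Finset.sum_apply]
    have hterm : ∀ j : (∀ f : (F : Finset (Fin m)), Fin (r f)),
        hierMatrix Γ r ⟨⟨F, hF⟩, j⟩ x = if j = (fun f : {y // y ∈ F} => x f.val) then 1 else 0 := by
      intro j
      simp only [hierMatrix]
      exact if_congr (by simp [funext_iff]) rfl rfl
    rw [Finset.sum_congr rfl (fun j _ => hterm j),
      Finset.sum_ite_eq' _ (fun f : {y // y ∈ F} => x f.val) (fun _ => (1:ℚ))]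
    by_cases hc : ∀ i, a i ≠ ⟨0, hr i⟩ → x i = a i
    · rw [if_pos hc, if_pos (Finset.mem_filter.mpr
        ⟨Finset.mem_univ _, fun (f : {y // y ∈ F}) hf => hc f.val hf⟩)]
    · refine (if_neg hc).trans (if_neg (fun h => hc (fun i hi => ?_))).symm
      exact (Finset.mem_filter.mp h).2 ⟨i, hsub i hi⟩ hi
  rw [key]
  exact Submodule.sum_mem _ fun j _ => Submodule.subset_span ⟨⟨⟨F, hF⟩, j⟩, rfl⟩

end spans2
section rankcard
variable {m : ℕ} {r : Fin m → ℕ}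

lemma rank_eq_card (hr : ∀ i, 0 < r i) (Γ : Finset (Finset (Fin m)))
    (hΓ : IsSimplicialComplex Γ) :
    (hierMatrix Γ r).rank
      = Fintype.card {a : ∀ i, Fin (r i) // (univ.filter fun i => a i ≠ ⟨0, hr i⟩) ∈ Γ} := by
  classical
  have hspan : Submodule.span ℚ (Set.range (hierMatrix Γ r))
      = Submodule.span ℚ (Set.range
        (fun a : {a : ∀ i, Fin (r i) // (univ.filter fun i => a i ≠ ⟨0, hr i⟩) ∈ Γ}
          => gg hr a.val)) := by
    apply le_antisymm
    · rw [Submodule.span_le]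
      rintro _ ⟨⟨⟨F, hF⟩, j⟩, rfl⟩
      exact row_mem_span hr Γ hΓ F hF j
    · rw [Submodule.span_le]
      rintro _ ⟨a, rfl⟩
      obtain ⟨F, hF, hsub⟩ := exists_facet Γ _ a.2
      exact gg_mem_rowspan hr Γ a.val F hF
        (fun i hi => hsub (Finset.mem_filter.mpr ⟨Finset.mem_univ i, hi⟩))
  have hli : LinearIndependent ℚ
      (fun a : {a : ∀ i, Fin (r i) // (univ.filter fun i => a i ≠ ⟨0, hr i⟩) ∈ Γ}
        => gg hr a.val) :=
    (gg_li hr).comp Subtype.val Subtype.val_injective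
  rw [Matrix.rank_eq_finrank_span_row, show (hierMatrix Γ r).row = hierMatrix Γ r from rfl, hspan, finrank_span_eq_card hli]

lemma card_supp_eq (hr : ∀ i, 0 < r i) (S : Finset (Fin m)) :
    ((univ : Finset (∀ i, Fin (r i))).filter
        (fun a => (univ.filter fun i => a i ≠ ⟨0, hr i⟩) = S)).card
      = ∏ i ∈ S, (r i - 1) := by
  classical
  have hset : (univ : Finset (∀ i, Fin (r i))).filter
      (fun a => (univ.filter fun i => a i ≠ ⟨0, hr i⟩) = S)
      = Fintype.piFinset (fun i => if i ∈ S then (univ \ {⟨0, hr i⟩}) else {⟨0, hr i⟩}) := by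
    ext a
    simp only [Finset.mem_filter, Finset.mem_univ, true_and, Fintype.mem_piFinset,
      Finset.ext_iff]
    constructor
    · intro h i
      by_cases hi : i ∈ S
      · have : a i ≠ ⟨0, hr i⟩ := by
          have := (h i).mpr hi
          simpa using this
        simp [hi, this]
      · have : ¬ a i ≠ ⟨0, hr i⟩ := fun hc => hi ((h i).mp (by simpa using hc))
        simp [hi, not_not.mp this]
    · intro h i
      by_cases hi : i ∈ S
      · have := h i
        rw [if_pos hi] at this
        simp only [Finset.mem_sdiff, Finset.mem_univ, Finset.mem_singleton, true_and] at this
        simp [hi, this]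
      · have := h i
        rw [if_neg hi] at this
        simp only [Finset.mem_singleton] at this
        simp [hi, this]
  rw [hset, Fintype.card_piFinset]
  have : ∀ i : Fin m, ((if i ∈ S then (univ \ {⟨0, hr i⟩}) else {(⟨0, hr i⟩ : Fin (r i))})).card
      = if i ∈ S then r i - 1 else 1 := by
    intro i
    by_cases hi : i ∈ S
    · rw [if_pos hi, if_pos hi, Finset.card_sdiff_of_subset (Finset.subset_univ _)]
      simp
    · rw [if_neg hi, if_neg hi, Finset.card_singleton]
  rw [Finset.prod_congr rfl (fun i _ => this i), Finset.prod_ite_mem univ S, Finset.univ_inter]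

lemma card_gamma (hr : ∀ i, 0 < r i) (Γ : Finset (Finset (Fin m))) :
    Fintype.card {a : ∀ i, Fin (r i) // (univ.filter fun i => a i ≠ ⟨0, hr i⟩) ∈ Γ}
      = ∑ S ∈ Γ, ∏ i ∈ S, (r i - 1) := by
  classical
  rw [Fintype.card_subtype]
  have hsplit : (univ : Finset (∀ i, Fin (r i))).filter
      (fun a => (univ.filter fun i => a i ≠ ⟨0, hr i⟩) ∈ Γ)
      = Γ.biUnion (fun S => (univ : Finset (∀ i, Fin (r i))).filter
        (fun a => (univ.filter fun i => a i ≠ ⟨0, hr i⟩) = S)) := by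
    ext a
    simp only [Finset.mem_filter, Finset.mem_univ, true_and, Finset.mem_biUnion]
    constructor
    · intro h
      exact ⟨_, h, rfl⟩
    · rintro ⟨S, hS, rfl⟩
      exact hS
  rw [hsplit, Finset.card_biUnion]
  · exact Finset.sum_congr rfl fun S _ => card_supp_eq hr S
  · intro S _ T _ hST
    apply Finset.disjoint_left.mpr
    intro a ha hb
    rw [Finset.mem_filter] at ha hb
    exact hST (ha.2.symm.trans hb.2)

end rankcard

/-- The rank of `A_Γ` equals the exponential Hilbert series of `Γ` evaluated at
`(log r_1, …, log r_m)`, the series converging absolutely. -/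
theorem rank_hierMatrix_eq_expHilbertSeries (m : ℕ) (Γ : Finset (Finset (Fin m)))
    (hΓ : IsSimplicialComplex Γ) (r : Fin m → ℕ) (hr : ∀ i, 0 < r i) :
    Summable (fun a : {a : Fin m → ℕ // (univ.filter fun i => a i ≠ 0) ∈ Γ} =>
        |∏ i, Real.log (r i) ^ (a.val i) / (Nat.factorial (a.val i) : ℝ)|) ∧
    ((hierMatrix Γ r).rank : ℝ)
      = ∑' a : {a : Fin m → ℕ // (univ.filter fun i => a i ≠ 0) ∈ Γ},
          ∏ i, Real.log (r i) ^ (a.val i) / (Nat.factorial (a.val i) : ℝ) := by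
  have ht : ∀ i, 0 ≤ Real.log (r i) := fun i =>
    Real.log_nonneg (by exact_mod_cast hr i)
  have hHS := hasSum_gamma Γ (fun i => Real.log (r i)) ht
  have habs : (fun a : {a : Fin m → ℕ // (univ.filter fun i => a i ≠ 0) ∈ Γ} =>
      |∏ i, Real.log (r i) ^ (a.val i) / (Nat.factorial (a.val i) : ℝ)|)
      = fun a => ∏ i, Real.log (r i) ^ (a.val i) / (Nat.factorial (a.val i) : ℝ) := by
    funext a
    exact abs_of_nonneg (Finset.prod_nonneg fun i _ =>
      div_nonneg (pow_nonneg (ht i) _) (by positivity))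
  refine ⟨by rw [habs]; exact hHS.summable, ?_⟩
  rw [hHS.tsum_eq, rank_eq_card hr Γ hΓ, card_gamma hr Γ]
  rw [Nat.cast_sum]
  refine Finset.sum_congr rfl fun S _ => ?_
  rw [Nat.cast_prod]
  refine Finset.prod_congr rfl fun i _ => ?_
  rw [Nat.cast_sub (hr i), Real.exp_log (by exact_mod_cast hr i)]
  simp
end

section
/- Let Γ be an abstract simplicial complex on [m], let r be a positive integer, and take r_1 = ⋯ = r_m = r. With d = dim(Γ) + 1, the rank over ℚ of A_Γ is rank(A_Γ) = ∑_{k=0}^{d} ∑_{i=k}^{d} (−1)^{i−k} f_{i−1} \binom{i}{k} r^k. -/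
open Finset

section Aux
variable (r : ℕ) [NeZero r]

/-- Base change matrix on `Fin r`: row 0 is all ones, row `a ≠ 0` is the
indicator of `a`. -/
def auxM : Matrix (Fin r) (Fin r) ℚ := fun a b => if a = 0 then 1 else if a = b then 1 else 0

/-- Inverse of `auxM`. -/
def auxN : Matrix (Fin r) (Fin r) ℚ :=
  fun a b => if a = 0 then (if b = 0 then 1 else -1) else if a = b then 1 else 0

lemma auxN_mul_auxM : auxN r * auxM r = 1 := by
  ext a b
  rw [Matrix.mul_apply, Matrix.one_apply]
  rcases eq_or_ne a 0 with ha | ha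
  · subst ha
    rcases eq_or_ne b 0 with hb | hb
    · subst hb
      have h1 : ∀ j : Fin r, auxN r 0 j * auxM r j 0 = if j = 0 then (1:ℚ) else 0 := by
        intro j; by_cases h : j = 0 <;> simp [auxN, auxM, h]
      rw [Finset.sum_congr rfl fun j _ => h1 j,
        Finset.sum_ite_eq' Finset.univ (0:Fin r) fun _ => (1:ℚ)]
      simp
    · have h1 : ∀ j : Fin r, auxN r 0 j * auxM r j b =
          (if j = 0 then (1:ℚ) else 0) + (if j = b then (-1:ℚ) else 0) := by
        intro j
        by_cases h : j = 0
        · subst h; simp [auxN, auxM, Ne.symm hb]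
        · by_cases h2 : j = b
          · subst h2; simp [auxN, auxM, h]
          · simp [auxN, auxM, h, h2]
      rw [Finset.sum_congr rfl fun j _ => h1 j, Finset.sum_add_distrib,
        Finset.sum_ite_eq' Finset.univ (0:Fin r) fun _ => (1:ℚ),
        Finset.sum_ite_eq' Finset.univ b fun _ => (-1:ℚ)]
      simp [Ne.symm hb]
  · have h1 : ∀ j : Fin r, auxN r a j * auxM r j b = if a = j then auxM r j b else 0 := by
      intro j
      by_cases h : a = j
      · subst h; simp [auxN, ha]
      · simp [auxN, ha, h]
    rw [Finset.sum_congr rfl fun j _ => h1 j,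
      Finset.sum_ite_eq Finset.univ a fun j => auxM r j b]
    simp [auxM, ha]

lemma auxM_mul_auxN : auxM r * auxN r = 1 := mul_eq_one_comm.mp (auxN_mul_auxM r)

variable (m : ℕ)

/-- `m`-fold Kronecker power of `auxM`. -/
def auxB : Matrix (Fin m → Fin r) (Fin m → Fin r) ℚ := fun x c => ∏ i, auxM r (x i) (c i)

def auxBi : Matrix (Fin m → Fin r) (Fin m → Fin r) ℚ := fun x c => ∏ i, auxN r (x i) (c i)

lemma auxB_mul_auxBi : auxB r m * auxBi r m = 1 := by
  ext x z
  rw [Matrix.mul_apply, Matrix.one_apply]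
  have h1 : ∀ y : Fin m → Fin r, auxB r m x y * auxBi r m y z
      = ∏ i, (auxM r (x i) (y i) * auxN r (y i) (z i)) := by
    intro y; rw [auxB, auxBi, ← Finset.prod_mul_distrib]
  rw [Finset.sum_congr rfl fun y _ => h1 y, ← Fintype.piFinset_univ,
    (Finset.prod_univ_sum (fun _ => Finset.univ)
      (fun i j => auxM r (x i) j * auxN r j (z i))).symm]
  have h2 : ∀ i, (∑ j : Fin r, auxM r (x i) j * auxN r j (z i)) = if x i = z i then (1:ℚ) else 0 := by
    intro i
    rw [← Matrix.mul_apply, auxM_mul_auxN, Matrix.one_apply]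
  rw [Finset.prod_congr rfl fun i _ => h2 i, Finset.prod_boole]
  rcases eq_or_ne x z with h | h
  · subst h; simp
  · rw [if_neg h, if_neg (fun hc => h (funext fun i => hc i (Finset.mem_univ i)))]

lemma auxB_li : LinearIndependent ℚ (fun x => auxB r m x) := by
  have : Invertible (auxB r m) := invertibleOfRightInverse _ _ (auxB_mul_auxBi r m)
  exact Matrix.linearIndependent_rows_of_invertible (auxB r m)

end Aux

/-- The support of a pattern. -/
def suppPat {m r : ℕ} [NeZero r] (x : Fin m → Fin r) : Finset (Fin m) :=
  Finset.univ.filter (fun i => x i ≠ 0)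

lemma mem_suppPat {m r : ℕ} [NeZero r] {x : Fin m → Fin r} {i : Fin m} :
    i ∈ suppPat x ↔ x i ≠ 0 := by simp [suppPat]

/-- The patterns whose support is a face of `Γ`. -/
def goodPats {m : ℕ} (Γ : Finset (Finset (Fin m))) (r : ℕ) [NeZero r] : Finset (Fin m → Fin r) :=
  Finset.univ.filter (fun x => suppPat x ∈ Γ)

lemma mem_goodPats {m : ℕ} {Γ : Finset (Finset (Fin m))} {r : ℕ} [NeZero r] {x : Fin m → Fin r} :
    x ∈ goodPats Γ r ↔ suppPat x ∈ Γ := by simp [goodPats]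

lemma row_mem_span_s6 {m : ℕ} (Γ : Finset (Finset (Fin m))) (hΓ : IsSimplicialComplex Γ)
    (r : ℕ) [NeZero r]
    (ρ : Σ F : {F : Finset (Fin m) // IsFacet Γ F},
      (∀ f : (F.val : Finset (Fin m)), Fin ((fun _ => r) f))) :
    hierMatrix Γ (fun _ => r) ρ ∈
      Submodule.span ℚ ((fun x => auxB r m x) '' ↑(goodPats Γ r)) := by
  obtain ⟨F, j⟩ := ρ
  set w : Fin m → Fin r → ℚ := fun i b =>
    if h : i ∈ F.val then auxN r (j ⟨i, h⟩) b else (if b = 0 then 1 else 0) with hw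
  have hrow : hierMatrix Γ (fun _ => r) ⟨F, j⟩
      = ∑ x : Fin m → Fin r, (∏ i, w i (x i)) • auxB r m x := by
    funext col
    have e1 : (∑ x : Fin m → Fin r, (∏ i, w i (x i)) • auxB r m x) col
        = ∑ x : Fin m → Fin r, ∏ i, (w i (x i) * auxM r (x i) (col i)) := by
      rw [Finset.sum_apply]
      refine Finset.sum_congr rfl fun x _ => ?_
      rw [Pi.smul_apply, smul_eq_mul]
      show (∏ i, w i (x i)) * (∏ i, auxM r (x i) (col i)) = _
      exact Finset.prod_mul_distrib.symm
    rw [e1, ← Fintype.piFinset_univ,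
      (Finset.prod_univ_sum (fun _ => Finset.univ)
        (fun i b => w i b * auxM r b (col i))).symm]
    have hfac : ∀ i : Fin m, (∑ b : Fin r, w i b * auxM r b (col i))
        = if (∀ h : i ∈ F.val, j ⟨i, h⟩ = col i) then (1:ℚ) else 0 := by
      intro i
      by_cases h : i ∈ F.val
      · have hwv : ∀ b, w i b = auxN r (j ⟨i, h⟩) b := fun b => by rw [hw]; exact dif_pos h
        rw [Finset.sum_congr rfl fun b _ => by rw [hwv b],
          ← Matrix.mul_apply, auxN_mul_auxM, Matrix.one_apply]
        by_cases H : j ⟨i, h⟩ = col i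
        · rw [if_pos H, if_pos (fun _ => H)]
        · rw [if_neg H, if_neg (fun hh => H (hh h))]
      · have h0 : ∀ b : Fin r, w i b * auxM r b (col i)
            = if b = 0 then auxM r b (col i) else 0 := by
          intro b
          rw [hw]
          simp only [dif_neg h]
          by_cases hb : b = 0 <;> simp [hb]
        rw [Finset.sum_congr rfl fun b _ => h0 b,
          Finset.sum_ite_eq' Finset.univ (0 : Fin r) (fun b => auxM r b (col i)),
          if_pos (Finset.mem_univ _), if_pos (fun hh => absurd hh h)]
        simp [auxM]
    rw [Finset.prod_congr rfl fun i _ => hfac i, Finset.prod_boole]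
    show (if (∀ f : (F.val : Finset (Fin m)), j f = col f) then (1:ℚ) else 0) = _
    by_cases H : ∀ f : (F.val : Finset (Fin m)), j f = col f
    · rw [if_pos H, if_pos (fun i _ hi => H ⟨i, hi⟩)]
    · rw [if_neg H, if_neg (fun HH => H (fun f => HH f (Finset.mem_univ _) f.2))]
  rw [hrow]
  refine Submodule.sum_mem _ fun x _ => ?_
  by_cases hx : x ∈ goodPats Γ r
  · exact Submodule.smul_mem _ _ (Submodule.subset_span ⟨x, hx, rfl⟩)
  · have hxs : ¬ suppPat x ⊆ F.val := fun hsubx =>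
      hx (mem_goodPats.mpr (hΓ.2.2 F.val F.2.1 _ hsubx))
    obtain ⟨i, hi1, hi2⟩ := Finset.not_subset.mp hxs
    have hwi : w i (x i) = 0 := by
      rw [hw]
      simp only [dif_neg hi2]
      rw [if_neg (mem_suppPat.mp hi1)]
    have hz : (∏ i, w i (x i)) = 0 := Finset.prod_eq_zero (Finset.mem_univ i) hwi
    rw [hz, zero_smul]
    exact Submodule.zero_mem _

lemma goodPat_mem_span {m : ℕ} (Γ : Finset (Finset (Fin m))) (r : ℕ) [NeZero r]
    (x : Fin m → Fin r) (hx : x ∈ goodPats Γ r) :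
    auxB r m x ∈ Submodule.span ℚ (Set.range (hierMatrix Γ (fun _ => r))) := by
  have hxΓ : suppPat x ∈ Γ := mem_goodPats.mp hx
  obtain ⟨F, hF, hsubx⟩ : ∃ F, IsFacet Γ F ∧ suppPat x ⊆ F := by
    obtain ⟨F, hFmem, hmax⟩ := Finset.exists_max_image (Γ.filter fun G => suppPat x ⊆ G)
      Finset.card ⟨suppPat x, Finset.mem_filter.mpr ⟨hxΓ, Finset.Subset.refl _⟩⟩
    rw [Finset.mem_filter] at hFmem
    exact ⟨F, ⟨hFmem.1, fun G hG hFG => (Finset.eq_of_subset_of_card_le hFG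
      (hmax G (Finset.mem_filter.mpr ⟨hG, hFmem.2.trans hFG⟩))).symm⟩, hFmem.2⟩
  have hkey : auxB r m x = ∑ jj : (∀ f : (F : Finset (Fin m)), Fin r),
      (if (∀ f : (F : Finset (Fin m)), x ↑f ≠ 0 → jj f = x ↑f) then (1:ℚ) else 0) •
        hierMatrix Γ (fun _ => r) ⟨⟨F, hF⟩, jj⟩ := by
    funext col
    rw [Finset.sum_apply]
    have e1 : ∀ jj : (∀ f : (F : Finset (Fin m)), Fin r),
        ((if (∀ f : (F : Finset (Fin m)), x ↑f ≠ 0 → jj f = x ↑f) then (1:ℚ) else 0) •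
          hierMatrix Γ (fun _ => r) ⟨⟨F, hF⟩, jj⟩) col
        = if jj = (fun f : (F : Finset (Fin m)) => col ↑f) then
            (if (∀ f : (F : Finset (Fin m)), x ↑f ≠ 0 → jj f = x ↑f) then (1:ℚ) else 0) else 0 := by
      intro jj
      rw [Pi.smul_apply, smul_eq_mul]
      show _ * (if (∀ f : (F : Finset (Fin m)), jj f = col ↑f) then (1:ℚ) else 0) = _
      by_cases h : jj = fun f : (F : Finset (Fin m)) => col ↑f
      · rw [if_pos h, if_pos (fun f => congrFun h f), mul_one]
      · rw [if_neg h, if_neg (fun hh => h (funext hh)), mul_zero]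
    rw [Finset.sum_congr rfl fun jj _ => e1 jj,
      Finset.sum_ite_eq' Finset.univ (fun f : (F : Finset (Fin m)) => col ↑f)
        (fun jj => if (∀ f : (F : Finset (Fin m)), x ↑f ≠ 0 → jj f = x ↑f) then (1:ℚ) else 0),
      if_pos (Finset.mem_univ _)]
    have e2 : ∀ i, auxM r (x i) (col i) = if (x i ≠ 0 → x i = col i) then (1:ℚ) else 0 := by
      intro i
      by_cases h : x i = 0
      · rw [if_pos (fun hh => absurd h hh)]
        simp [auxM, h]
      · show (if x i = 0 then 1 else if x i = col i then (1:ℚ) else 0) = _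
        rw [if_neg h]
        by_cases h2 : x i = col i
        · rw [if_pos h2, if_pos fun _ => h2]
        · rw [if_neg h2, if_neg fun hh => h2 (hh h)]
    show (∏ i, auxM r (x i) (col i)) = _
    rw [Finset.prod_congr rfl fun i _ => e2 i, Finset.prod_boole]
    by_cases H : ∀ f : (F : Finset (Fin m)), x ↑f ≠ 0 → col ↑f = x ↑f
    · rw [if_pos H, if_pos (fun i _ hne =>
        (H ⟨i, hsubx (mem_suppPat.mpr hne)⟩ hne).symm)]
    · rw [if_neg H, if_neg (fun HH => H (fun f hne => (HH ↑f (Finset.mem_univ _) hne).symm))]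
  rw [hkey]
  exact Submodule.sum_mem _ fun jj _ =>
    Submodule.smul_mem _ _ (Submodule.subset_span ⟨⟨⟨F, hF⟩, jj⟩, rfl⟩)

lemma rank_eq_card_goodPats {m : ℕ} (Γ : Finset (Finset (Fin m)))
    (hΓ : IsSimplicialComplex Γ) (r : ℕ) [NeZero r] :
    (hierMatrix Γ (fun _ => r)).rank = (goodPats Γ r).card := by
  have hspan : Submodule.span ℚ (Set.range (hierMatrix Γ (fun _ => r)))
      = Submodule.span ℚ ((fun x => auxB r m x) '' ↑(goodPats Γ r)) := by
    refine le_antisymm (Submodule.span_le.mpr ?_) (Submodule.span_le.mpr ?_)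
    · rintro _ ⟨ρ, rfl⟩
      exact row_mem_span_s6 Γ hΓ r ρ
    · rintro _ ⟨x, hx, rfl⟩
      exact goodPat_mem_span Γ r x (Finset.mem_coe.mp hx)
  rw [Matrix.rank_eq_finrank_span_row,
    show Set.range (hierMatrix Γ fun _ => r).row = Set.range (hierMatrix Γ fun _ => r) from rfl, hspan]
  have hli : LinearIndependent ℚ
      ((fun x => auxB r m x) ∘ (Subtype.val : {x // x ∈ goodPats Γ r} → (Fin m → Fin r))) :=
    (auxB_li r m).comp _ Subtype.val_injective
  have h2 := finrank_span_eq_card hli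
  rw [Set.range_comp, Subtype.range_coe_subtype] at h2
  simp only [Finset.setOf_mem, Fintype.card_coe] at h2
  exact h2

lemma card_goodPats {m : ℕ} (Γ : Finset (Finset (Fin m))) (r : ℕ) [NeZero r] :
    (goodPats Γ r).card = ∑ G ∈ Γ, (r - 1) ^ G.card := by
  classical
  rw [Finset.card_eq_sum_card_fiberwise (f := suppPat) (t := Γ)
    (fun x hx => mem_goodPats.mp hx)]
  refine Finset.sum_congr rfl fun G hG => ?_
  have hset : (goodPats Γ r).filter (fun x => suppPat x = G) = Fintype.piFinset
      (fun i => if i ∈ G then Finset.univ.filter (fun b : Fin r => b ≠ 0) else {0}) := by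
    ext x
    simp only [Fintype.mem_piFinset, Finset.mem_filter]
    constructor
    · rintro ⟨-, hx⟩ i
      by_cases hi : i ∈ G
      · rw [if_pos hi]
        have : i ∈ suppPat x := hx ▸ hi
        simpa using mem_suppPat.mp this
      · rw [if_neg hi]
        have : i ∉ suppPat x := fun hc => hi (hx ▸ hc)
        have hx0 : x i = 0 := by
          by_contra hc
          exact this (mem_suppPat.mpr hc)
        simp [hx0]
    · intro h
      have hsx : suppPat x = G := by
        ext i
        specialize h i
        by_cases hi : i ∈ G
        · rw [if_pos hi] at h
          simp only [Finset.mem_filter, Finset.mem_univ, true_and] at h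
          simp [mem_suppPat, hi, h]
        · rw [if_neg hi] at h
          simp only [Finset.mem_singleton] at h
          simp [mem_suppPat, hi, h]
      exact ⟨mem_goodPats.mpr (hsx ▸ hG), hsx⟩
  rw [hset, Fintype.card_piFinset]
  have hcards : ∀ i, ((if i ∈ G then Finset.univ.filter (fun b : Fin r => b ≠ 0)
      else ({0} : Finset (Fin r))).card) = if i ∈ G then r - 1 else 1 := by
    intro i
    by_cases hi : i ∈ G
    · rw [if_pos hi, if_pos hi, Finset.filter_ne' Finset.univ (0 : Fin r),
        Finset.card_erase_of_mem (Finset.mem_univ _)]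
      simp
    · rw [if_neg hi, if_neg hi, Finset.card_singleton]
  rw [Finset.prod_congr rfl fun i _ => hcards i]
  rw [Finset.prod_ite_mem Finset.univ G (fun _ => r - 1), Finset.univ_inter,
    Finset.prod_const]

/-- If all variables have `r` states, then, with `d = dim Γ + 1`,
`rank(A_Γ) = ∑_{k=0}^d ∑_{i=k}^d (-1)^{i-k} f_{i-1} C(i,k) r^k`. -/
theorem rank_hierMatrix_eq_double_sum (m : ℕ) (Γ : Finset (Finset (Fin m)))
    (hΓ : IsSimplicialComplex Γ) (r : ℕ) (hr : 0 < r)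
    (d : ℕ) (hd : d = Γ.sup Finset.card) :
    ((hierMatrix Γ fun _ => r).rank : ℤ)
      = ∑ k ∈ Finset.range (d + 1), (∑ i ∈ Finset.Icc k d,
          (-1 : ℤ) ^ (i - k) * ((Γ.filter fun F => F.card = i).card : ℤ) * Nat.choose i k)
            * (r : ℤ) ^ k := by
  haveI : NeZero r := ⟨hr.ne'⟩
  have hdc : ∀ G ∈ Γ, G.card ≤ d := fun G hG => hd ▸ Finset.le_sup hG
  rw [rank_eq_card_goodPats Γ hΓ r, card_goodPats Γ r]
  have hcast : ((∑ G ∈ Γ, (r - 1) ^ G.card : ℕ) : ℤ) = ∑ G ∈ Γ, ((r : ℤ) - 1) ^ G.card := by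
    push_cast [Nat.cast_sub hr]
    ring_nf
  rw [hcast]
  have h5 : ∑ G ∈ Γ, ((r : ℤ) - 1) ^ G.card
      = ∑ i ∈ Finset.range (d + 1),
          ((Γ.filter fun F => F.card = i).card : ℤ) * ((r : ℤ) - 1) ^ i := by
    rw [← Finset.sum_fiberwise_of_maps_to (g := Finset.card)
      (fun G hG => Finset.mem_range.mpr (Nat.lt_succ_of_le (hdc G hG)))
      (fun G => ((r : ℤ) - 1) ^ G.card)]
    refine Finset.sum_congr rfl fun i _ => ?_
    rw [Finset.sum_congr rfl (fun G hG => by rw [(Finset.mem_filter.mp hG).2]),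
      Finset.sum_const, nsmul_eq_mul]
  rw [h5]
  have hIcc : ∀ k, Finset.Icc k d = (Finset.range (d + 1)).filter (fun i => k ≤ i) := by
    intro k; ext i; simp [Nat.lt_succ_iff, and_comm]
  calc ∑ i ∈ Finset.range (d + 1),
        ((Γ.filter fun F => F.card = i).card : ℤ) * ((r : ℤ) - 1) ^ i
      = ∑ i ∈ Finset.range (d + 1), ∑ k ∈ Finset.range (i + 1),
          (-1 : ℤ) ^ (i - k) * ((Γ.filter fun F => F.card = i).card : ℤ)
            * Nat.choose i k * (r : ℤ) ^ k := by
        refine Finset.sum_congr rfl fun i _ => ?_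
        rw [sub_eq_add_neg, add_pow, Finset.mul_sum]
        refine Finset.sum_congr rfl fun k _ => ?_
        ring
    _ = ∑ i ∈ Finset.range (d + 1), ∑ k ∈ Finset.range (d + 1),
          (if k ≤ i then (-1 : ℤ) ^ (i - k) * ((Γ.filter fun F => F.card = i).card : ℤ)
            * Nat.choose i k * (r : ℤ) ^ k else 0) := by
        refine Finset.sum_congr rfl fun i hi => ?_
        rw [← Finset.sum_filter]
        refine (Finset.sum_congr ?_ fun k _ => rfl)
        ext k
        simp only [Finset.mem_range, Finset.mem_filter, Nat.lt_succ_iff]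
        exact ⟨fun h => ⟨h.trans (Finset.mem_range.mp hi |> Nat.lt_succ_iff.mp), h⟩,
          fun h => h.2⟩
    _ = ∑ k ∈ Finset.range (d + 1), ∑ i ∈ Finset.range (d + 1),
          (if k ≤ i then (-1 : ℤ) ^ (i - k) * ((Γ.filter fun F => F.card = i).card : ℤ)
            * Nat.choose i k * (r : ℤ) ^ k else 0) := Finset.sum_comm
    _ = ∑ k ∈ Finset.range (d + 1), (∑ i ∈ Finset.Icc k d,
          (-1 : ℤ) ^ (i - k) * ((Γ.filter fun F => F.card = i).card : ℤ) * Nat.choose i k)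
            * (r : ℤ) ^ k := by
        refine Finset.sum_congr rfl fun k _ => ?_
        rw [Finset.sum_mul, hIcc k, Finset.sum_filter]
end
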